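/- arXiv:1102.2838 — 3 statements merged into one kernel-verified Lean document; each statement's English description precedes it below -/
import Mathlib

section
/- For every r > 0, every global smooth flow φ of X_r, every x ∈ H and every t ≥ 0, if φ(s,x) ∈ E(r) for all s ∈ [0,t], then t ≤ (ln 2)/α₀ + (ln 2)/β. -/
open scoped InnerProductSpace

set_option maxHeartbeats 1000000 in
/-- A trajectory of the flow of `X_r` can spend at most time
`ln 2/α₀ + ln 2/β` inside the transition region
`E(r) = {‖x₁‖ ≤ r, ‖x₂‖ ≤ r} \ {‖x₁‖ < r/2, ‖x₂‖ < r/2}`. -/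
theorem time_in_transition_region_le
    {H₁ H₂ : Type*} [NormedAddCommGroup H₁] [InnerProductSpace ℝ H₁] [CompleteSpace H₁]
    [NormedAddCommGroup H₂] [InnerProductSpace ℝ H₂] [CompleteSpace H₂]
    (A₀ A₁ : H₁ →L[ℝ] H₁) (B : H₂ →L[ℝ] H₂)
    (α₀ α₁ β : ℝ) (hα₀ : 0 < α₀) (hα₁ : 0 < α₁) (hβ : 0 < β)
    (hA₀ : ∀ w : H₁, α₀ * ⟪w, w⟫_ℝ ≤ ⟪A₀ w, w⟫_ℝ ∧ ⟪A₀ w, w⟫_ℝ ≤ α₁ * ⟪w, w⟫_ℝ)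
    (hA₁ : ∀ w : H₁, α₀ * ⟪w, w⟫_ℝ ≤ ⟪A₁ w, w⟫_ℝ ∧ ⟪A₁ w, w⟫_ℝ ≤ α₁ * ⟪w, w⟫_ℝ)
    (hB : ∀ w : H₂, β * ⟪w, w⟫_ℝ ≤ ⟪B w, w⟫_ℝ)
    (ρ : ℝ → ℝ) (hρ : ContDiff ℝ (⊤ : ℕ∞) ρ)
    (hρ01 : ∀ s : ℝ, 0 ≤ ρ s ∧ ρ s ≤ 1)
    (hρone : ∀ s : ℝ, s ≤ 1 / 2 → ρ s = 1)
    (hρzero : ∀ s : ℝ, 1 ≤ s → ρ s = 0)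
    (r : ℝ) (hr : 0 < r)
    (X : H₁ × H₂ → H₁ × H₂)
    (hX : ∀ x : H₁ × H₂,
      X x = ((ρ (‖x.1‖ / r) * ρ (‖x.2‖ / r)) • A₀ x.1
              + (1 - ρ (‖x.1‖ / r) * ρ (‖x.2‖ / r)) • A₁ x.1,
             -B x.2))
    (φ : ℝ → H₁ × H₂ → H₁ × H₂)
    (hφsmooth : ContDiff ℝ (⊤ : ℕ∞) (fun p : ℝ × (H₁ × H₂) => φ p.1 p.2))
    (hφzero : ∀ x, φ 0 x = x)
    (hφode : ∀ t x, HasDerivAt (fun s => φ s x) (X (φ t x)) t)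
    (x : H₁ × H₂) (t : ℝ) (ht : 0 ≤ t)
    (hE : ∀ s ∈ Set.Icc (0 : ℝ) t,
      (‖(φ s x).1‖ ≤ r ∧ ‖(φ s x).2‖ ≤ r) ∧
      ¬(‖(φ s x).1‖ < r / 2 ∧ ‖(φ s x).2‖ < r / 2)) :
    t ≤ Real.log 2 / α₀ + Real.log 2 / β := by
  have hlog2 : 0 < Real.log 2 := Real.log_pos (by norm_num)
  have hbpos : 0 < Real.log 2 / β := div_pos hlog2 hβ
  have hapos : 0 < Real.log 2 / α₀ := div_pos hlog2 hα₀
  -- trajectory components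
  set y1 : ℝ → H₁ := fun s => (φ s x).1 with hy1
  set y2 : ℝ → H₂ := fun s => (φ s x).2 with hy2
  have hd1 : ∀ s, HasDerivAt y1 ((X (φ s x)).1) s := fun s =>
    (ContinuousLinearMap.fst ℝ H₁ H₂).hasFDerivAt.comp_hasDerivAt s (hφode s x)
  have hd2 : ∀ s, HasDerivAt y2 ((X (φ s x)).2) s := fun s =>
    (ContinuousLinearMap.snd ℝ H₁ H₂).hasFDerivAt.comp_hasDerivAt s (hφode s x)
  set f : ℝ → ℝ := fun s => ⟪y1 s, y1 s⟫_ℝ with hf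
  set g : ℝ → ℝ := fun s => ⟪y2 s, y2 s⟫_ℝ with hg
  have hfder : ∀ s, HasDerivAt f (2 * ⟪(X (φ s x)).1, y1 s⟫_ℝ) s := by
    intro s
    have := (hd1 s).inner ℝ (hd1 s)
    exact this.congr_deriv (by rw [real_inner_comm]; ring)
  have hgder : ∀ s, HasDerivAt g (2 * ⟪(X (φ s x)).2, y2 s⟫_ℝ) s := by
    intro s
    have := (hd2 s).inner ℝ (hd2 s)
    exact this.congr_deriv (by rw [real_inner_comm]; ring)
  -- pointwise differential inequalities
  have hfineq : ∀ s, α₀ * f s ≤ ⟪(X (φ s x)).1, y1 s⟫_ℝ := by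
    intro s
    have h1 : (X (φ s x)).1 = (ρ (‖y1 s‖ / r) * ρ (‖y2 s‖ / r)) • A₀ (y1 s)
        + (1 - ρ (‖y1 s‖ / r) * ρ (‖y2 s‖ / r)) • A₁ (y1 s) := by
      rw [hX (φ s x)]
    rw [h1, inner_add_left, real_inner_smul_left, real_inner_smul_left]
    have hlam0 : 0 ≤ ρ (‖y1 s‖ / r) * ρ (‖y2 s‖ / r) :=
      mul_nonneg (hρ01 _).1 (hρ01 _).1
    have hlam1 : ρ (‖y1 s‖ / r) * ρ (‖y2 s‖ / r) ≤ 1 :=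
      mul_le_one₀ (hρ01 _).2 (hρ01 _).1 (hρ01 _).2
    have hA0 := (hA₀ (y1 s)).1
    have hA1 := (hA₁ (y1 s)).1
    have hfs : f s = ⟪y1 s, y1 s⟫_ℝ := rfl
    rw [hfs]
    have p1 : 0 ≤ (ρ (‖y1 s‖ / r) * ρ (‖y2 s‖ / r)) *
        (⟪A₀ (y1 s), y1 s⟫_ℝ - α₀ * ⟪y1 s, y1 s⟫_ℝ) :=
      mul_nonneg hlam0 (by linarith)
    have p2 : 0 ≤ (1 - ρ (‖y1 s‖ / r) * ρ (‖y2 s‖ / r)) *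
        (⟪A₁ (y1 s), y1 s⟫_ℝ - α₀ * ⟪y1 s, y1 s⟫_ℝ) :=
      mul_nonneg (by linarith) (by linarith)
    nlinarith [p1, p2]
  have hgineq : ∀ s, ⟪(X (φ s x)).2, y2 s⟫_ℝ ≤ -(β * g s) := by
    intro s
    have h2 : (X (φ s x)).2 = -B (y2 s) := by rw [hX (φ s x)]
    rw [h2, inner_neg_left]
    have := hB (y2 s)
    have hgs : g s = ⟪y2 s, y2 s⟫_ℝ := rfl
    rw [hgs]
    linarith
  -- auxiliary functions and monotonicity (Gronwall)
  set F : ℝ → ℝ := fun s => f s * Real.exp (-(2 * α₀) * s) with hF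
  set G : ℝ → ℝ := fun s => g s * Real.exp (2 * β * s) with hG
  have hFder : ∀ s, HasDerivAt F
      (2 * ⟪(X (φ s x)).1, y1 s⟫_ℝ * Real.exp (-(2 * α₀) * s)
        + f s * (Real.exp (-(2 * α₀) * s) * -(2 * α₀))) s := by
    intro s
    have he : HasDerivAt (fun u => Real.exp (-(2 * α₀) * u))
        (Real.exp (-(2 * α₀) * s) * -(2 * α₀)) s := by
      simpa using (((hasDerivAt_id s).const_mul (-(2 * α₀))).exp)
    exact (hfder s).mul he
  have hGder : ∀ s, HasDerivAt G
      (2 * ⟪(X (φ s x)).2, y2 s⟫_ℝ * Real.exp (2 * β * s)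
        + g s * (Real.exp (2 * β * s) * (2 * β))) s := by
    intro s
    have he : HasDerivAt (fun u => Real.exp (2 * β * u))
        (Real.exp (2 * β * s) * (2 * β)) s := by
      simpa using (((hasDerivAt_id s).const_mul (2 * β)).exp)
    exact (hgder s).mul he
  have hFmono : Monotone F := by
    apply monotone_of_deriv_nonneg (fun s => (hFder s).differentiableAt)
    intro s
    rw [(hFder s).deriv]
    have h1 := hfineq s
    have h2 : (0 : ℝ) < Real.exp (-(2 * α₀) * s) := Real.exp_pos _
    nlinarith [mul_nonneg (sub_nonneg.2 h1) h2.le]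
  have hGanti : Antitone G := by
    apply antitone_of_deriv_nonpos (fun s => (hGder s).differentiableAt)
    intro s
    rw [(hGder s).deriv]
    have h1 := hgineq s
    have h2 : (0 : ℝ) < Real.exp (2 * β * s) := Real.exp_pos _
    nlinarith [mul_nonneg h2.le
      (by linarith : (0:ℝ) ≤ -(⟪(X (φ s x)).2, y2 s⟫_ℝ + β * g s))]
  -- endpoint bounds
  have h0mem : (0 : ℝ) ∈ Set.Icc (0 : ℝ) t := ⟨le_refl 0, ht⟩
  have htmem : t ∈ Set.Icc (0 : ℝ) t := ⟨ht, le_refl t⟩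
  have hg0 : g 0 ≤ r ^ 2 := by
    have hb : ‖y2 0‖ ≤ r := ((hE 0 h0mem).1).2
    have h : g 0 = ‖y2 0‖ ^ 2 := real_inner_self_eq_norm_sq (y2 0)
    rw [h]
    nlinarith [norm_nonneg (y2 0)]
  have hft : f t ≤ r ^ 2 := by
    have hb : ‖y1 t‖ ≤ r := ((hE t htmem).1).1
    have h : f t = ‖y1 t‖ ^ 2 := real_inner_self_eq_norm_sq (y1 t)
    rw [h]
    nlinarith [norm_nonneg (y1 t)]
  have hexp4 : ∀ a : ℝ, Real.exp a ≤ 4 → a ≤ 2 * Real.log 2 := by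
    intro a ha
    have h4 : (4 : ℝ) = Real.exp (Real.log 4) := (Real.exp_log (by norm_num)).symm
    rw [h4] at ha
    have h5 := Real.exp_le_exp.mp ha
    have hl4 : Real.log 4 = 2 * Real.log 2 := by
      have h6 : (4 : ℝ) = 2 ^ (2 : ℕ) := by norm_num
      rw [h6, Real.log_pow]; push_cast; ring
    linarith [hl4 ▸ h5]
  -- key dichotomy
  have key : ∀ s ∈ Set.Icc (0 : ℝ) t, s ≤ Real.log 2 / β ∨ t - s ≤ Real.log 2 / α₀ := by
    intro s hs
    have hcase := (hE s hs).2
    rw [not_and_or, not_lt, not_lt] at hcase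
    rcases hcase with h1 | h2
    · -- ‖y1 s‖ ≥ r/2
      right
      have hfs : r ^ 2 / 4 ≤ f s := by
        have h : f s = ‖y1 s‖ ^ 2 := real_inner_self_eq_norm_sq (y1 s)
        have h1' : r / 2 ≤ ‖y1 s‖ := h1
        rw [h]
        nlinarith
      have hmono := hFmono hs.2
      have hFs : F s = f s * Real.exp (-(2 * α₀) * s) := rfl
      have hFt : F t = f t * Real.exp (-(2 * α₀) * t) := rfl
      rw [hFs, hFt] at hmono
      have hept : (0:ℝ) < Real.exp (-(2 * α₀) * t) := Real.exp_pos _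
      have heps : (0:ℝ) < Real.exp (-(2 * α₀) * s) := Real.exp_pos _
      have hmul : Real.exp (-(2 * α₀) * s)
          = Real.exp (2 * α₀ * (t - s)) * Real.exp (-(2 * α₀) * t) := by
        rw [← Real.exp_add]; ring_nf
      have hfs' : r ^ 2 / 4 * (Real.exp (2 * α₀ * (t - s)) * Real.exp (-(2 * α₀) * t))
          ≤ f t * Real.exp (-(2 * α₀) * t) := by
        rw [← hmul]
        exact le_trans (mul_le_mul_of_nonneg_right hfs heps.le) hmono
      have hkey : r ^ 2 / 4 * Real.exp (2 * α₀ * (t - s)) ≤ r ^ 2 := by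
        have h7 : r ^ 2 / 4 * Real.exp (2 * α₀ * (t - s)) * Real.exp (-(2 * α₀) * t)
            ≤ r ^ 2 * Real.exp (-(2 * α₀) * t) := by
          calc r ^ 2 / 4 * Real.exp (2 * α₀ * (t - s)) * Real.exp (-(2 * α₀) * t)
              = r ^ 2 / 4 * (Real.exp (2 * α₀ * (t - s)) * Real.exp (-(2 * α₀) * t)) := by ring
            _ ≤ f t * Real.exp (-(2 * α₀) * t) := hfs'
            _ ≤ r ^ 2 * Real.exp (-(2 * α₀) * t) :=
                mul_le_mul_of_nonneg_right hft hept.le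
        exact le_of_mul_le_mul_right h7 hept
      have hexple : Real.exp (2 * α₀ * (t - s)) ≤ 4 := by
        have hr2 : (0:ℝ) < r ^ 2 / 4 := by positivity
        have h4 : r ^ 2 / 4 * Real.exp (2 * α₀ * (t - s)) ≤ r ^ 2 / 4 * 4 := by linarith
        exact le_of_mul_le_mul_left h4 hr2
      have h8 := hexp4 _ hexple
      rw [le_div_iff₀ hα₀]
      linarith
    · -- ‖y2 s‖ ≥ r/2
      left
      have hgs : r ^ 2 / 4 ≤ g s := by
        have h : g s = ‖y2 s‖ ^ 2 := real_inner_self_eq_norm_sq (y2 s)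
        have h2' : r / 2 ≤ ‖y2 s‖ := h2
        rw [h]
        nlinarith
      have hanti := hGanti hs.1
      have hGs : G s = g s * Real.exp (2 * β * s) := rfl
      have hG0 : G 0 = g 0 * Real.exp (2 * β * 0) := rfl
      rw [hGs, hG0] at hanti
      simp only [mul_zero, Real.exp_zero, mul_one] at hanti
      have heps : (0:ℝ) < Real.exp (2 * β * s) := Real.exp_pos _
      have hkey : r ^ 2 / 4 * Real.exp (2 * β * s) ≤ r ^ 2 :=
        le_trans (mul_le_mul_of_nonneg_right hgs heps.le) (le_trans hanti hg0)
      have hexple : Real.exp (2 * β * s) ≤ 4 := by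
        have hr2 : (0:ℝ) < r ^ 2 / 4 := by positivity
        have h4 : r ^ 2 / 4 * Real.exp (2 * β * s) ≤ r ^ 2 / 4 * 4 := by linarith
        exact le_of_mul_le_mul_left h4 hr2
      have h8 := hexp4 _ hexple
      rw [le_div_iff₀ hβ]
      linarith
  -- conclude
  by_contra hcon
  push_neg at hcon
  set s₀ : ℝ := Real.log 2 / β + (t - (Real.log 2 / α₀ + Real.log 2 / β)) / 2 with hs₀
  have hs₀mem : s₀ ∈ Set.Icc (0 : ℝ) t := by
    constructor
    · rw [hs₀]; linarith
    · rw [hs₀]; linarith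
  rcases key s₀ hs₀mem with h | h
  · rw [hs₀] at h; linarith
  · rw [hs₀] at h; linarith
end

section
/- There exist constants K₁ > 0 and K₂ > 0, independent of r, with the following property: for every r > 0, every global smooth flow φ of X_r, every x ∈ H and every t ≥ 0 such that φ(s,x) ∈ E(r) for all s ∈ [0,t], the derivative D = Dφ_t(x) satisfies ‖P₁ D(w₁,0)‖ ≥ K₁‖w₁‖ for every w₁ ∈ H₁ and ‖P₁ D(0,w₂)‖ ≤ K₂‖w₂‖ for every w₂ ∈ H₂, where P₁ : H₁ × H₂ → H₁ is the projection onto the first factor. -/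
open scoped InnerProductSpace


open scoped InnerProductSpace
open Set Real

private lemma expGron {u u' : ℝ → ℝ} {c t₀ t₁ : ℝ} (h01 : t₀ ≤ t₁)
    (hu : ∀ s, HasDerivAt u (u' s) s)
    (hb : ∀ s ∈ Set.Icc t₀ t₁, u' s ≤ c * u s) :
    u t₁ ≤ Real.exp (c * (t₁ - t₀)) * u t₀ := by
  set f : ℝ → ℝ := fun s => Real.exp (-c * s) * u s with hf
  have h1 : ∀ s : ℝ, HasDerivAt (fun s : ℝ => Real.exp (-c * s)) (Real.exp (-c * s) * (-c)) s := by
    intro s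
    simpa using ((hasDerivAt_id s).const_mul (-c)).exp
  have hfd : ∀ s, HasDerivAt f (Real.exp (-c * s) * u' s - c * Real.exp (-c * s) * u s) s := by
    intro s
    have h2 := (h1 s).mul (hu s)
    exact h2.congr_deriv (by ring)
  have hA : AntitoneOn f (Set.Icc t₀ t₁) := by
    apply antitoneOn_of_deriv_nonpos (convex_Icc _ _)
    · exact fun s _ => ((hfd s).continuousAt).continuousWithinAt
    · exact fun s _ => ((hfd s).differentiableAt).differentiableWithinAt
    · intro s hs
      rw [interior_Icc] at hs
      rw [(hfd s).deriv]
      have hb' := hb s ⟨hs.1.le, hs.2.le⟩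
      nlinarith [Real.exp_pos (-c * s)]
  have key : f t₁ ≤ f t₀ := hA ⟨le_refl _, h01⟩ ⟨h01, le_refl _⟩ h01
  have h2 := mul_le_mul_of_nonneg_left key (Real.exp_nonneg (c * t₁))
  rw [hf] at h2
  simp only [← mul_assoc, ← Real.exp_add] at h2
  have e1 : c * t₁ + -c * t₁ = 0 := by ring
  have e2 : c * t₁ + -c * t₀ = c * (t₁ - t₀) := by ring
  rw [e1, e2, Real.exp_zero, one_mul] at h2
  exact h2

private lemma expGronGe {u u' : ℝ → ℝ} {c t₀ t₁ : ℝ} (h01 : t₀ ≤ t₁)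
    (hu : ∀ s, HasDerivAt u (u' s) s)
    (hb : ∀ s ∈ Set.Icc t₀ t₁, c * u s ≤ u' s) :
    Real.exp (c * (t₁ - t₀)) * u t₀ ≤ u t₁ := by
  have h := expGron (u := fun s => -u s) (u' := fun s => -u' s) (c := c) h01
    (fun s => (hu s).neg) (fun s hs => by simpa [mul_neg] using neg_le_neg (hb s hs))
  rw [mul_neg] at h
  linarith [show -u t₁ ≤ -(Real.exp (c * (t₁ - t₀)) * u t₀) from h]

private lemma expGronInhom {u u' : ℝ → ℝ} {c d t₀ t₁ : ℝ} (hc : 0 < c) (h01 : t₀ ≤ t₁)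
    (hu : ∀ s, HasDerivAt u (u' s) s)
    (hb : ∀ s ∈ Set.Icc t₀ t₁, u' s ≤ c * u s + d) :
    u t₁ + d / c ≤ Real.exp (c * (t₁ - t₀)) * (u t₀ + d / c) := by
  have h := expGron (u := fun s => u s + d / c) (u' := u') (c := c) h01
    (fun s => (hu s).add_const _) (fun s hs => by
      have h1 : c * (u s + d / c) = c * u s + d := by field_simp
      rw [h1]; exact hb s hs)
  exact h

private lemma inner_self_deriv {E : Type*} [NormedAddCommGroup E] [InnerProductSpace ℝ E]
    {f f' : ℝ → E} (hf : ∀ s, HasDerivAt f (f' s) s) (s : ℝ) :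
    HasDerivAt (fun σ => ⟪f σ, f σ⟫_ℝ) (2 * ⟪f' s, f s⟫_ℝ) s := by
  have h := (hf s).inner ℝ (hf s)
  exact h.congr_deriv (by rw [real_inner_comm]; ring)

private lemma bump_fderiv {F : Type*} [NormedAddCommGroup F] [InnerProductSpace ℝ F]
    {ρ : ℝ → ℝ} (hρ : ContDiff ℝ (⊤ : ℕ∞) ρ) (hρone : ∀ s : ℝ, s ≤ 1 / 2 → ρ s = 1)
    {L r : ℝ} (hL0 : 0 ≤ L) (hL : ∀ s, |deriv ρ s| ≤ L) (hr : 0 < r) (y : F) :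
    ∃ N : F →L[ℝ] ℝ, HasFDerivAt (fun z : F => ρ (‖z‖ / r)) N y ∧ ‖N‖ ≤ L / r := by
  have hLr : (0:ℝ) ≤ L / r := div_nonneg hL0 hr.le
  by_cases hy : ‖y‖ < r / 2
  · refine ⟨0, ?_, by simpa using hLr⟩
    have hev : ∀ᶠ z in nhds y, (fun z : F => ρ (‖z‖ / r)) z = (fun _ : F => (1:ℝ)) z := by
      have hopen : IsOpen {z : F | ‖z‖ < r / 2} := isOpen_lt continuous_norm continuous_const
      filter_upwards [hopen.mem_nhds hy] with z hz
      exact hρone _ (by rw [div_le_div_iff₀ hr (by norm_num : (0:ℝ) < 2)]; linarith [hz.le])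
    exact (hasFDerivAt_const (1:ℝ) y).congr_of_eventuallyEq hev
  · push_neg at hy
    have hy0 : y ≠ 0 := by
      intro h; rw [h, norm_zero] at hy; nlinarith
    have hcd : ContDiffAt ℝ 1 (fun z : F => ρ (‖z‖ / r)) y := by
      have h1 : ContDiffAt ℝ 1 (fun z : F => ‖z‖ / r) y :=
        (contDiffAt_norm ℝ hy0).div_const r
      exact ((hρ.of_le (by simp)).contDiffAt).comp y h1
    have hd : DifferentiableAt ℝ (fun z : F => ρ (‖z‖ / r)) y :=
      hcd.differentiableAt one_ne_zero
    refine ⟨fderiv ℝ (fun z : F => ρ (‖z‖ / r)) y, hd.hasFDerivAt, ?_⟩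
    have hlipρ : LipschitzWith L.toNNReal ρ := by
      apply lipschitzWith_of_nnnorm_deriv_le (hρ.differentiable (by simp))
      intro s
      rw [← NNReal.coe_le_coe, coe_nnnorm, Real.norm_eq_abs, Real.coe_toNNReal L hL0]
      exact hL s
    have hlipdiv : LipschitzWith (r⁻¹).toNNReal (fun a : ℝ => a / r) := by
      apply LipschitzWith.of_dist_le_mul
      intro a b
      rw [Real.dist_eq, Real.dist_eq, Real.coe_toNNReal _ (inv_nonneg.2 hr.le), div_sub_div_same]
      rw [abs_div, abs_of_pos hr, div_eq_inv_mul]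
    have hlip : LipschitzWith (L.toNNReal * (r⁻¹).toNNReal * 1)
        (fun z : F => ρ (‖z‖ / r)) :=
      (hlipρ.comp hlipdiv).comp lipschitzWith_one_norm
    have hle := hd.hasFDerivAt.le_of_lipschitz hlip
    refine le_trans hle ?_
    rw [div_eq_mul_inv]
    push_cast [Real.coe_toNNReal _ hL0, Real.coe_toNNReal _ (inv_nonneg.2 hr.le)]
    simp

private lemma X_fderiv {H₁ H₂ : Type*} [NormedAddCommGroup H₁] [InnerProductSpace ℝ H₁]
    [NormedAddCommGroup H₂] [InnerProductSpace ℝ H₂]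
    (A₀ A₁ : H₁ →L[ℝ] H₁) (B : H₂ →L[ℝ] H₂)
    {ρ : ℝ → ℝ} (hρ : ContDiff ℝ (⊤ : ℕ∞) ρ) (hρone : ∀ s : ℝ, s ≤ 1 / 2 → ρ s = 1)
    (hρ01 : ∀ s : ℝ, 0 ≤ ρ s ∧ ρ s ≤ 1)
    {L r : ℝ} (hL0 : 0 ≤ L) (hL : ∀ s, |deriv ρ s| ≤ L) (hr : 0 < r)
    (X : H₁ × H₂ → H₁ × H₂)
    (hX : ∀ x : H₁ × H₂,
      X x = ((ρ (‖x.1‖ / r) * ρ (‖x.2‖ / r)) • A₀ x.1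
              + (1 - ρ (‖x.1‖ / r) * ρ (‖x.2‖ / r)) • A₁ x.1, -B x.2))
    (y : H₁ × H₂) :
    ∃ D : (H₁ × H₂) →L[ℝ] (H₁ × H₂), HasFDerivAt X D y ∧
      (∀ u : H₁ × H₂, (D u).2 = -B u.2) ∧
      (‖y.1‖ ≤ r → ∀ u : H₁ × H₂,
        |⟪(D u).1, u.1⟫_ℝ - (ρ (‖y.1‖/r) * ρ (‖y.2‖/r)) * ⟪A₀ u.1, u.1⟫_ℝ
          - (1 - ρ (‖y.1‖/r) * ρ (‖y.2‖/r)) * ⟪A₁ u.1, u.1⟫_ℝ|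
          ≤ L * (‖A₀‖ + ‖A₁‖) * (‖u.1‖ + ‖u.2‖) * ‖u.1‖) := by
  classical
  obtain ⟨N₁, hN₁, hN₁b⟩ := bump_fderiv hρ hρone hL0 hL hr y.1
  obtain ⟨N₂, hN₂, hN₂b⟩ := bump_fderiv hρ hρone hL0 hL hr y.2
  set fst := ContinuousLinearMap.fst ℝ H₁ H₂
  set snd := ContinuousLinearMap.snd ℝ H₁ H₂
  have hb₁ : HasFDerivAt (fun z : H₁ × H₂ => ρ (‖z.1‖ / r)) (N₁.comp fst) y :=
    hN₁.comp y fst.hasFDerivAt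
  have hb₂ : HasFDerivAt (fun z : H₁ × H₂ => ρ (‖z.2‖ / r)) (N₂.comp snd) y :=
    hN₂.comp y snd.hasFDerivAt
  set G : (H₁ × H₂) →L[ℝ] ℝ :=
    ρ (‖y.1‖ / r) • (N₂.comp snd) + ρ (‖y.2‖ / r) • (N₁.comp fst) with hG
  have hg : HasFDerivAt (fun z : H₁ × H₂ => ρ (‖z.1‖ / r) * ρ (‖z.2‖ / r)) G y :=
    hb₁.mul hb₂
  have hsm : HasFDerivAt (fun z : H₁ × H₂ => (ρ (‖z.1‖ / r) * ρ (‖z.2‖ / r)) • ((A₀ - A₁).comp fst) z)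
      ((ρ (‖y.1‖ / r) * ρ (‖y.2‖ / r)) • ((A₀ - A₁).comp fst)
        + G.smulRight (((A₀ - A₁).comp fst) y)) y :=
    hg.smul ((A₀ - A₁).comp fst).hasFDerivAt
  set D₁ : (H₁ × H₂) →L[ℝ] H₁ :=
    A₁.comp fst + ((ρ (‖y.1‖ / r) * ρ (‖y.2‖ / r)) • ((A₀ - A₁).comp fst)
        + G.smulRight (((A₀ - A₁).comp fst) y)) with hD₁
  have h1 : HasFDerivAt (fun z : H₁ × H₂ =>
      (A₁.comp fst) z + (ρ (‖z.1‖ / r) * ρ (‖z.2‖ / r)) • ((A₀ - A₁).comp fst) z) D₁ y :=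
    (A₁.comp fst).hasFDerivAt.add hsm
  have h2 : HasFDerivAt (fun z : H₁ × H₂ => -((B.comp snd) z)) (-(B.comp snd)) y :=
    (B.comp snd).hasFDerivAt.neg
  have hDfull : HasFDerivAt X (D₁.prod (-(B.comp snd))) y := by
    refine (h1.prodMk h2).congr_of_eventuallyEq (Filter.Eventually.of_forall fun z => ?_)
    rw [hX z]
    refine Prod.ext ?_ rfl
    simp only [fst, snd, ContinuousLinearMap.comp_apply, ContinuousLinearMap.sub_apply,
      ContinuousLinearMap.coe_fst', ContinuousLinearMap.coe_snd', smul_sub, sub_smul, one_smul]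
    abel
  refine ⟨D₁.prod (-(B.comp snd)), hDfull, fun u => ?_, ?_⟩
  · simp [snd, ContinuousLinearMap.prod_apply]
  · intro hy1 u
    have happ : (D₁.prod (-(B.comp snd)) u).1
        = A₁ u.1 + ((ρ (‖y.1‖ / r) * ρ (‖y.2‖ / r)) • ((A₀ - A₁) u.1) + (G u) • ((A₀ - A₁) y.1)) := by
      simp [hD₁, fst, snd, ContinuousLinearMap.prod_apply, ContinuousLinearMap.add_apply,
        ContinuousLinearMap.smul_apply, ContinuousLinearMap.smulRight_apply,
        ContinuousLinearMap.comp_apply]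
    rw [happ]
    have hinner : ⟪A₁ u.1 + ((ρ (‖y.1‖ / r) * ρ (‖y.2‖ / r)) • ((A₀ - A₁) u.1)
        + (G u) • ((A₀ - A₁) y.1)), u.1⟫_ℝ
        - (ρ (‖y.1‖/r) * ρ (‖y.2‖/r)) * ⟪A₀ u.1, u.1⟫_ℝ
        - (1 - ρ (‖y.1‖/r) * ρ (‖y.2‖/r)) * ⟪A₁ u.1, u.1⟫_ℝ
        = (G u) * ⟪(A₀ - A₁) y.1, u.1⟫_ℝ := by
      simp only [inner_add_left, real_inner_smul_left, ContinuousLinearMap.sub_apply,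
        inner_sub_left]
      ring
    rw [hinner]
    have hGu : |G u| ≤ L / r * (‖u.1‖ + ‖u.2‖) := by
      have e : G u = ρ (‖y.1‖ / r) * (N₂ u.2) + ρ (‖y.2‖ / r) * (N₁ u.1) := by
        simp [hG, fst, snd, ContinuousLinearMap.add_apply, ContinuousLinearMap.smul_apply,
          ContinuousLinearMap.comp_apply, smul_eq_mul]
      rw [e]
      have b1 : |N₁ u.1| ≤ L / r * ‖u.1‖ := by
        calc |N₁ u.1| = ‖N₁ u.1‖ := (Real.norm_eq_abs _).symm
        _ ≤ ‖N₁‖ * ‖u.1‖ := N₁.le_opNorm _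
        _ ≤ L / r * ‖u.1‖ := by gcongr
      have b2 : |N₂ u.2| ≤ L / r * ‖u.2‖ := by
        calc |N₂ u.2| = ‖N₂ u.2‖ := (Real.norm_eq_abs _).symm
        _ ≤ ‖N₂‖ * ‖u.2‖ := N₂.le_opNorm _
        _ ≤ L / r * ‖u.2‖ := by gcongr
      have hr1 := (hρ01 (‖y.1‖ / r)).1
      have hr1' := (hρ01 (‖y.1‖ / r)).2
      have hr2 := (hρ01 (‖y.2‖ / r)).1
      have hr2' := (hρ01 (‖y.2‖ / r)).2
      calc |ρ (‖y.1‖ / r) * (N₂ u.2) + ρ (‖y.2‖ / r) * (N₁ u.1)|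
          ≤ |ρ (‖y.1‖ / r) * (N₂ u.2)| + |ρ (‖y.2‖ / r) * (N₁ u.1)| := abs_add_le _ _
        _ = |ρ (‖y.1‖ / r)| * |N₂ u.2| + |ρ (‖y.2‖ / r)| * |N₁ u.1| := by rw [abs_mul, abs_mul]
        _ ≤ 1 * |N₂ u.2| + 1 * |N₁ u.1| := by
            gcongr <;> rw [abs_of_nonneg (by assumption)] <;> assumption
        _ = |N₂ u.2| + |N₁ u.1| := by ring
        _ ≤ L / r * ‖u.2‖ + L / r * ‖u.1‖ := add_le_add b2 b1
        _ = L / r * (‖u.1‖ + ‖u.2‖) := by ring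
    have hin : |⟪(A₀ - A₁) y.1, u.1⟫_ℝ| ≤ (‖A₀‖ + ‖A₁‖) * r * ‖u.1‖ := by
      calc |⟪(A₀ - A₁) y.1, u.1⟫_ℝ| ≤ ‖(A₀ - A₁) y.1‖ * ‖u.1‖ := abs_real_inner_le_norm _ _
        _ ≤ (‖A₀ - A₁‖ * ‖y.1‖) * ‖u.1‖ := by gcongr; exact (A₀ - A₁).le_opNorm _
        _ ≤ ((‖A₀‖ + ‖A₁‖) * r) * ‖u.1‖ := by
            have h := norm_sub_le A₀ A₁
            gcongr
    calc |G u * ⟪(A₀ - A₁) y.1, u.1⟫_ℝ| = |G u| * |⟪(A₀ - A₁) y.1, u.1⟫_ℝ| := abs_mul _ _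
      _ ≤ (L / r * (‖u.1‖ + ‖u.2‖)) * ((‖A₀‖ + ‖A₁‖) * r * ‖u.1‖) := by
          apply mul_le_mul hGu hin (abs_nonneg _)
          positivity
      _ = L * (‖A₀‖ + ‖A₁‖) * (‖u.1‖ + ‖u.2‖) * ‖u.1‖ := by
          field_simp

private lemma flow_linearization {H : Type*} [NormedAddCommGroup H] [NormedSpace ℝ H]
    (X : H → H) (φ : ℝ → H → H)
    (hΦs : ContDiff ℝ (⊤ : ℕ∞) (fun p : ℝ × H => φ p.1 p.2))
    (hflow : ∀ t x, HasDerivAt (fun s => φ s x) (X (φ t x)) t)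
    (DX : H → H →L[ℝ] H) (hDX : ∀ y, HasFDerivAt X (DX y) y)
    (x w : H) (s : ℝ) :
    HasDerivAt (fun σ : ℝ => fderiv ℝ (fun p : ℝ × H => φ p.1 p.2) (σ, x) (0, w))
      (DX (φ s x) (fderiv ℝ (fun p : ℝ × H => φ p.1 p.2) (s, x) (0, w))) s := by
  set Φ : ℝ × H → H := fun p => φ p.1 p.2 with hΦdef
  have hΦd : Differentiable ℝ Φ := hΦs.differentiable (by simp)
  set DΦ : ℝ × H → (ℝ × H) →L[ℝ] H := fderiv ℝ Φ with hDΦdef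
  have hDΦ : ∀ p, HasFDerivAt Φ (DΦ p) p := fun p => (hΦd p).hasFDerivAt
  have hcurve : ∀ (σ : ℝ) (z : H), HasDerivAt (fun s : ℝ => (s, z)) ((1:ℝ), (0:H)) σ :=
    fun σ z => (hasDerivAt_id σ).prodMk (hasDerivAt_const σ z)
  have F1 : ∀ p : ℝ × H, DΦ p ((1:ℝ), (0:H)) = X (Φ p) := by
    rintro ⟨a, z⟩
    have h1 : HasDerivAt (fun σ => Φ (σ, z)) (DΦ (a, z) ((1:ℝ), (0:H))) a := by
      simpa [Function.comp_def] using (hDΦ (a, z)).comp_hasDerivAt a (hcurve a z)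
    exact h1.unique (hflow a z)
  have hD2 : HasFDerivAt DΦ (fderiv ℝ DΦ (s, x)) (s, x) := by
    have h : Differentiable ℝ DΦ := (hΦs.fderiv_right (m := (⊤ : ℕ∞)) (by simp)).differentiable (by simp)
    exact (h (s, x)).hasFDerivAt
  set f'' := fderiv ℝ DΦ (s, x) with hf''
  have h1 : HasDerivAt (fun σ => DΦ (σ, x)) (f'' ((1:ℝ), (0:H))) s := by
    simpa [Function.comp_def] using hD2.comp_hasDerivAt s (hcurve s x)
  have h2 : HasDerivAt (fun σ => DΦ (σ, x) ((0:ℝ), w)) (f'' ((1:ℝ), (0:H)) ((0:ℝ), w)) s := by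
    have := (ContinuousLinearMap.apply ℝ H ((0:ℝ), w)).hasFDerivAt.comp_hasDerivAt s h1
    simpa [Function.comp_def] using this
  have hsymm : f'' ((1:ℝ), (0:H)) ((0:ℝ), w) = f'' ((0:ℝ), w) ((1:ℝ), (0:H)) :=
    second_derivative_symmetric hDΦ hD2 _ _
  have h3 : HasFDerivAt (fun p : ℝ × H => DΦ p ((1:ℝ), (0:H)))
      ((ContinuousLinearMap.apply ℝ H ((1:ℝ), (0:H))).comp f'') (s, x) :=
    (ContinuousLinearMap.apply ℝ H ((1:ℝ), (0:H))).hasFDerivAt.comp (s, x) hD2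
  have h4 : HasFDerivAt (fun p : ℝ × H => X (Φ p)) ((DX (φ s x)).comp (DΦ (s, x))) (s, x) :=
    (hDX (φ s x)).comp (s, x) (hDΦ (s, x))
  have hfe : (fun p : ℝ × H => DΦ p ((1:ℝ), (0:H))) = fun p : ℝ × H => X (Φ p) := funext F1
  have h5 : (ContinuousLinearMap.apply ℝ H ((1:ℝ), (0:H))).comp f''
      = (DX (φ s x)).comp (DΦ (s, x)) := by
    apply h3.unique
    rw [hfe]
    exact h4
  have h6 : f'' ((0:ℝ), w) ((1:ℝ), (0:H)) = DX (φ s x) (DΦ (s, x) ((0:ℝ), w)) := by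
    have := congrArg (fun T : (ℝ × H) →L[ℝ] H => T ((0:ℝ), w)) h5
    simpa using this
  rw [hsymm, h6] at h2
  exact h2

private lemma flow_fderiv_apply {H : Type*} [NormedAddCommGroup H] [NormedSpace ℝ H]
    (φ : ℝ → H → H)
    (hΦs : ContDiff ℝ (⊤ : ℕ∞) (fun p : ℝ × H => φ p.1 p.2))
    (s : ℝ) (x : H) (D : H →L[ℝ] H) (hD : HasFDerivAt (φ s) D x) (w : H) :
    D w = fderiv ℝ (fun p : ℝ × H => φ p.1 p.2) (s, x) (0, w) := by
  have hΦd : Differentiable ℝ (fun p : ℝ × H => φ p.1 p.2) := hΦs.differentiable (by simp)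
  have h1 : HasFDerivAt (fun z : H => (fun p : ℝ × H => φ p.1 p.2) (s, z))
      ((fderiv ℝ (fun p : ℝ × H => φ p.1 p.2) (s, x)).comp
        ((0 : H →L[ℝ] ℝ).prod (ContinuousLinearMap.id ℝ H))) x :=
    (hΦd (s, x)).hasFDerivAt.comp x ((hasFDerivAt_const s x).prodMk (hasFDerivAt_id x))
  have h2 := hD.unique h1
  rw [h2]
  simp [ContinuousLinearMap.comp_apply, ContinuousLinearMap.prod_apply]

set_option maxHeartbeats 2000000 in
/-- There are constants `K₁, K₂ > 0`, independent of `r`, controlling the blocks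
`D₁φ¹` and `D₂φ¹` of the derivative of the flow of `X_r` along any trajectory
segment that stays in the transition region `E(r)`. -/
theorem derivative_blocks_bounds_in_transition_region
    {H₁ H₂ : Type*} [NormedAddCommGroup H₁] [InnerProductSpace ℝ H₁] [CompleteSpace H₁]
    [NormedAddCommGroup H₂] [InnerProductSpace ℝ H₂] [CompleteSpace H₂]
    (A₀ A₁ : H₁ →L[ℝ] H₁) (B : H₂ →L[ℝ] H₂)
    (α₀ α₁ β : ℝ) (hα₀ : 0 < α₀) (hα₁ : 0 < α₁) (hβ : 0 < β)
    (hA₀ : ∀ w : H₁, α₀ * ⟪w, w⟫_ℝ ≤ ⟪A₀ w, w⟫_ℝ ∧ ⟪A₀ w, w⟫_ℝ ≤ α₁ * ⟪w, w⟫_ℝ)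
    (hA₁ : ∀ w : H₁, α₀ * ⟪w, w⟫_ℝ ≤ ⟪A₁ w, w⟫_ℝ ∧ ⟪A₁ w, w⟫_ℝ ≤ α₁ * ⟪w, w⟫_ℝ)
    (hB : ∀ w : H₂, β * ⟪w, w⟫_ℝ ≤ ⟪B w, w⟫_ℝ)
    (ρ : ℝ → ℝ) (hρ : ContDiff ℝ (⊤ : ℕ∞) ρ)
    (hρ01 : ∀ s : ℝ, 0 ≤ ρ s ∧ ρ s ≤ 1)
    (hρone : ∀ s : ℝ, s ≤ 1 / 2 → ρ s = 1)
    (hρzero : ∀ s : ℝ, 1 ≤ s → ρ s = 0) :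
    ∃ K₁ K₂ : ℝ, 0 < K₁ ∧ 0 < K₂ ∧
      ∀ r : ℝ, 0 < r →
      ∀ X : H₁ × H₂ → H₁ × H₂,
        (∀ x : H₁ × H₂,
          X x = ((ρ (‖x.1‖ / r) * ρ (‖x.2‖ / r)) • A₀ x.1
                  + (1 - ρ (‖x.1‖ / r) * ρ (‖x.2‖ / r)) • A₁ x.1,
                 -B x.2)) →
      ∀ φ : ℝ → H₁ × H₂ → H₁ × H₂,
        ContDiff ℝ (⊤ : ℕ∞) (fun p : ℝ × (H₁ × H₂) => φ p.1 p.2) →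
        (∀ x, φ 0 x = x) →
        (∀ t x, HasDerivAt (fun s => φ s x) (X (φ t x)) t) →
      ∀ Dφ : ℝ → H₁ × H₂ → (H₁ × H₂) →L[ℝ] (H₁ × H₂),
        (∀ t x, HasFDerivAt (φ t) (Dφ t x) x) →
      ∀ (x : H₁ × H₂) (t : ℝ), 0 ≤ t →
        (∀ s ∈ Set.Icc (0 : ℝ) t,
          (‖(φ s x).1‖ ≤ r ∧ ‖(φ s x).2‖ ≤ r) ∧
          ¬(‖(φ s x).1‖ < r / 2 ∧ ‖(φ s x).2‖ < r / 2)) →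
        (∀ w₁ : H₁, K₁ * ‖w₁‖ ≤ ‖(Dφ t x (w₁, 0)).1‖) ∧
        (∀ w₂ : H₂, ‖(Dφ t x (0, w₂)).1‖ ≤ K₂ * ‖w₂‖) := by
  classical
  obtain ⟨L, hL0, hL⟩ : ∃ L : ℝ, 0 ≤ L ∧ ∀ s, |deriv ρ s| ≤ L := by
    have hc : Continuous fun s => |deriv ρ s| := (hρ.continuous_deriv (by simp)).abs
    obtain ⟨z, hz, hzmax⟩ := isCompact_Icc.exists_isMaxOn
      (⟨0, by norm_num⟩ : (Set.Icc (0:ℝ) 1).Nonempty) hc.continuousOn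
    refine ⟨|deriv ρ z|, abs_nonneg _, fun s => ?_⟩
    by_cases hs : s ∈ Set.Icc (0:ℝ) 1
    · exact hzmax hs
    · have hzero : deriv ρ s = 0 := by
        rw [Set.mem_Icc, not_and_or, not_le, not_le] at hs
        rcases hs with hs | hs
        · have hev : ρ =ᶠ[nhds s] fun _ => (1:ℝ) := by
            filter_upwards [Iio_mem_nhds (show s < 1/2 by linarith)] with a ha
            exact hρone a ha.le
          rw [hev.deriv_eq]; exact deriv_const _ _
        · have hev : ρ =ᶠ[nhds s] fun _ => (0:ℝ) := by
            filter_upwards [Ioi_mem_nhds hs] with a ha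
            exact hρzero a ha.le
          rw [hev.deriv_eq]; exact deriv_const _ _
      rw [hzero, abs_zero]
      exact abs_nonneg _
  set CA : ℝ := ‖A₀‖ + ‖A₁‖ with hCAdef
  have hCA0 : 0 ≤ CA := by positivity
  set LCA : ℝ := L * CA with hLCAdef
  have hLCA0 : 0 ≤ LCA := mul_nonneg hL0 hCA0
  have hlog5 : 0 < Real.log 5 := Real.log_pos (by norm_num)
  set T : ℝ := Real.log 5 / (2*β) + Real.log 5 / (2*α₀) with hTdef
  have hs₁T : Real.log 5 / (2*β) ≤ T := by
    have h : 0 < Real.log 5 / (2*α₀) := by positivity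
    rw [hTdef]; linarith
  have hTpos : 0 < T := by rw [hTdef]; positivity
  set mneg : ℝ := -(LCA + α₁ + 1) with hmnegdef
  have hmneg0 : mneg < 0 := by rw [hmnegdef]; nlinarith
  set c : ℝ := 2*α₁ + 3*(LCA+1) with hcdef
  have hcpos : 0 < c := by rw [hcdef]; nlinarith
  clear_value CA LCA T mneg c
  refine ⟨Real.exp (mneg*T), Real.sqrt (Real.exp (c*T) * (LCA+1) / c),
    Real.exp_pos _,
    Real.sqrt_pos.2 (div_pos (mul_pos (Real.exp_pos _) (by linarith)) hcpos), ?_⟩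
  intro r hr X hX φ hΦs hφ0 hflow Dφ hDφ x t ht hE
  choose DX hDXprop using fun y => X_fderiv A₀ A₁ B hρ hρone hρ01 hL0 hL hr X hX y
  have hDXd : ∀ y, HasFDerivAt X (DX y) y := fun y => (hDXprop y).1
  have hDX2 : ∀ y u, ((DX y) u).2 = -B u.2 := fun y => (hDXprop y).2.1
  have hDX3 : ∀ y : H₁ × H₂, ‖y.1‖ ≤ r → ∀ u : H₁ × H₂,
      |⟪(DX y u).1, u.1⟫_ℝ - (ρ (‖y.1‖/r) * ρ (‖y.2‖/r)) * ⟪A₀ u.1, u.1⟫_ℝ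
        - (1 - ρ (‖y.1‖/r) * ρ (‖y.2‖/r)) * ⟪A₁ u.1, u.1⟫_ℝ|
        ≤ LCA * (‖u.1‖ + ‖u.2‖) * ‖u.1‖ := by
    intro y hy u
    have h := (hDXprop y).2.2 hy u
    rw [hLCAdef, hCAdef]
    exact h
  have hg01 : ∀ y : H₁ × H₂, 0 ≤ ρ (‖y.1‖/r) * ρ (‖y.2‖/r) ∧ ρ (‖y.1‖/r) * ρ (‖y.2‖/r) ≤ 1 := by
    intro y
    constructor
    · exact mul_nonneg (hρ01 _).1 (hρ01 _).1
    · nlinarith [(hρ01 (‖y.1‖/r)).1, (hρ01 (‖y.1‖/r)).2, (hρ01 (‖y.2‖/r)).1,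
        (hρ01 (‖y.2‖/r)).2]
  have hflow1 : ∀ s : ℝ, HasDerivAt (fun σ => (φ σ x).1) ((X (φ s x)).1) s := fun s => by
    simpa [Function.comp_def] using (ContinuousLinearMap.fst ℝ H₁ H₂).hasFDerivAt.comp_hasDerivAt s (hflow s x)
  have hflow2 : ∀ s : ℝ, HasDerivAt (fun σ => (φ σ x).2) ((X (φ s x)).2) s := fun s => by
    simpa [Function.comp_def] using (ContinuousLinearMap.snd ℝ H₁ H₂).hasFDerivAt.comp_hasDerivAt s (hflow s x)
  have hXlow : ∀ s : ℝ, (2*α₀) * ⟪(φ s x).1, (φ s x).1⟫_ℝ ≤ 2 * ⟪(X (φ s x)).1, (φ s x).1⟫_ℝ := by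
    intro s
    have h1 : (X (φ s x)).1 = (ρ (‖(φ s x).1‖/r) * ρ (‖(φ s x).2‖/r)) • A₀ (φ s x).1
        + (1 - ρ (‖(φ s x).1‖/r) * ρ (‖(φ s x).2‖/r)) • A₁ (φ s x).1 := by rw [hX (φ s x)]
    rw [h1, inner_add_left, real_inner_smul_left, real_inner_smul_left]
    obtain ⟨hg0, hg1⟩ := hg01 (φ s x)
    nlinarith [(hA₀ (φ s x).1).1, (hA₁ (φ s x).1).1,
      (show (0:ℝ) ≤ ⟪(φ s x).1, (φ s x).1⟫_ℝ from real_inner_self_nonneg),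
      mul_nonneg hg0 (sub_nonneg.2 (hA₀ (φ s x).1).1),
      mul_nonneg (sub_nonneg.2 hg1) (sub_nonneg.2 (hA₁ (φ s x).1).1)]
  have hXhigh2 : ∀ s : ℝ, 2 * ⟪(X (φ s x)).2, (φ s x).2⟫_ℝ
      ≤ (-(2*β)) * ⟪(φ s x).2, (φ s x).2⟫_ℝ := by
    intro s
    have h1 : (X (φ s x)).2 = -B (φ s x).2 := by rw [hX (φ s x)]
    rw [h1, inner_neg_left]
    linarith [hB (φ s x).2]
  have htT : t ≤ T := by
    by_contra hTlt
    push_neg at hTlt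
    set s₁ : ℝ := Real.log 5 / (2*β) with hs₁def
    clear_value s₁
    have hs₁0 : 0 ≤ s₁ := by rw [hs₁def]; positivity
    have hs₁t : s₁ ≤ t := le_trans hs₁T hTlt.le
    have hbdecay := expGron (c := -(2*β)) hs₁0 (fun s => inner_self_deriv hflow2 s)
      (fun s _ => hXhigh2 s)
    have hexp1 : Real.exp (-(2*β) * (s₁ - 0)) = 1/5 := by
      have he : -(2*β) * (s₁ - 0) = -Real.log 5 := by
        rw [hs₁def]; field_simp; ring
      rw [he, Real.exp_neg, Real.exp_log (by norm_num : (0:ℝ) < 5)]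
      norm_num
    have hb0 : ⟪(φ 0 x).2, (φ 0 x).2⟫_ℝ ≤ r^2 := by
      rw [real_inner_self_eq_norm_sq]
      have h := ((hE 0 ⟨le_refl 0, ht⟩).1).2
      nlinarith [norm_nonneg (φ 0 x).2]
    have hbs₁ : ‖(φ s₁ x).2‖ < r/2 := by
      have h1 := hbdecay
      rw [hexp1] at h1
      have h2 : ⟪(φ s₁ x).2, (φ s₁ x).2⟫_ℝ ≤ 1/5 * r^2 := by nlinarith
      rw [real_inner_self_eq_norm_sq] at h2
      nlinarith [norm_nonneg (φ s₁ x).2, hr]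
    have hnot := (hE s₁ ⟨hs₁0, hs₁t⟩).2
    have ha1 : r/2 ≤ ‖(φ s₁ x).1‖ := by
      by_contra hcon; push_neg at hcon; exact hnot ⟨hcon, hbs₁⟩
    have has₁ : r^2/4 ≤ ⟪(φ s₁ x).1, (φ s₁ x).1⟫_ℝ := by
      rw [real_inner_self_eq_norm_sq]; nlinarith [hr]
    have hagrow := expGronGe (c := 2*α₀) hs₁t (fun s => inner_self_deriv hflow1 s)
      (fun s _ => hXlow s)
    have hexp2 : (5:ℝ) < Real.exp (2*α₀*(t - s₁)) := by
      have h1 : Real.log 5 / (2*α₀) < t - s₁ := by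
        have hTsum : T = s₁ + Real.log 5 / (2*α₀) := by rw [hTdef, hs₁def]
        linarith
      have h2 : Real.log 5 < 2*α₀*(t - s₁) := by
        rw [div_lt_iff₀ (by positivity : (0:ℝ) < 2*α₀)] at h1
        linarith
      calc (5:ℝ) = Real.exp (Real.log 5) := (Real.exp_log (by norm_num)).symm
        _ < Real.exp (2*α₀*(t-s₁)) := Real.exp_lt_exp.2 h2
    have hat : ⟪(φ t x).1, (φ t x).1⟫_ℝ ≤ r^2 := by
      rw [real_inner_self_eq_norm_sq]
      have h := ((hE t ⟨ht, le_refl t⟩).1).1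
      nlinarith [norm_nonneg (φ t x).1]
    nlinarith [hagrow, hexp2, has₁, hat, hr,
      mul_nonneg (Real.exp_pos (2*α₀*(t-s₁))).le (sub_nonneg.2 has₁),
      mul_nonneg (sub_nonneg.2 hexp2.le) (by positivity : (0:ℝ) ≤ r^2/4)]
  have hnorm1 : ∀ s ∈ Set.Icc (0:ℝ) t, ‖(φ s x).1‖ ≤ r := fun s hs => ((hE s hs).1).1
  have key : ∀ w : H₁ × H₂, ∃ U : ℝ → H₁ × H₂, U 0 = w ∧ Dφ t x w = U t ∧
      (∀ s, HasDerivAt U (DX (φ s x) (U s)) s) := by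
    intro w
    refine ⟨fun s => fderiv ℝ (fun p : ℝ × (H₁ × H₂) => φ p.1 p.2) (s, x) (0, w), ?_, ?_, ?_⟩
    · show fderiv ℝ (fun p : ℝ × (H₁ × H₂) => φ p.1 p.2) ((0:ℝ), x) (0, w) = w
      have h1 := flow_fderiv_apply φ hΦs 0 x (Dφ 0 x) (hDφ 0 x) w
      have hid : HasFDerivAt (φ 0) (ContinuousLinearMap.id ℝ (H₁ × H₂)) x :=
        (hasFDerivAt_id x).congr_of_eventuallyEq (Filter.Eventually.of_forall fun z => hφ0 z)
      have h2 : Dφ 0 x = ContinuousLinearMap.id ℝ (H₁ × H₂) := (hDφ 0 x).unique hid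
      rw [← h1, h2]; simp
    · exact flow_fderiv_apply φ hΦs t x (Dφ t x) (hDφ t x) w
    · exact fun s => flow_linearization X φ hΦs hflow DX hDXd x w s
  have hUsnd : ∀ (U : ℝ → H₁ × H₂), (∀ s, HasDerivAt U (DX (φ s x) (U s)) s) →
      ∀ s, 0 ≤ s → ⟪(U s).2, (U s).2⟫_ℝ ≤ ⟪(U 0).2, (U 0).2⟫_ℝ := by
    intro U hU s hs
    have hU2 : ∀ σ : ℝ, HasDerivAt (fun τ => (U τ).2) (-B ((U σ).2)) σ := by
      intro σ
      have h := (ContinuousLinearMap.snd ℝ H₁ H₂).hasFDerivAt.comp_hasDerivAt σ (hU σ)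
      simpa [hDX2, Function.comp_def] using h
    have h := expGron (c := (0:ℝ)) hs (fun σ => inner_self_deriv hU2 σ) ?_
    · simpa using h
    · intro σ _
      rw [inner_neg_left]
      have h1 := hB ((U σ).2)
      have h2 : (0:ℝ) ≤ ⟪(U σ).2, (U σ).2⟫_ℝ := real_inner_self_nonneg
      nlinarith [mul_nonneg hβ.le h2]
  constructor
  · -- lower bound block
    intro w₁
    obtain ⟨U, hU0, hUt, hU⟩ := key (w₁, (0:H₂))
    have h2zero : ∀ s, 0 ≤ s → (U s).2 = 0 := by
      intro s hs
      have h := hUsnd U hU s hs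
      rw [hU0] at h
      simp only [inner_zero_left] at h
      have h2 : (0:ℝ) ≤ ⟪(U s).2, (U s).2⟫_ℝ := real_inner_self_nonneg
      have h3 : ⟪(U s).2, (U s).2⟫_ℝ = 0 := le_antisymm h h2
      exact inner_self_eq_zero.1 h3
    have hV : ∀ s, HasDerivAt (fun σ => (U σ).1) ((DX (φ s x) (U s)).1) s := by
      intro s
      simpa [Function.comp_def] using (ContinuousLinearMap.fst ℝ H₁ H₂).hasFDerivAt.comp_hasDerivAt s (hU s)
    have hlow : ∀ s ∈ Set.Icc (0:ℝ) t,
        (2*mneg) * ⟪(U s).1, (U s).1⟫_ℝ ≤ 2 * ⟪(DX (φ s x) (U s)).1, (U s).1⟫_ℝ := by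
      intro s hs
      have habs := hDX3 (φ s x) (hnorm1 s hs) (U s)
      rw [h2zero s hs.1, norm_zero, add_zero] at habs
      obtain ⟨hg0, hg1⟩ := hg01 (φ s x)
      have hq : (0:ℝ) ≤ ⟪(U s).1, (U s).1⟫_ℝ := real_inner_self_nonneg
      have hqn : ⟪(U s).1, (U s).1⟫_ℝ = ‖(U s).1‖^2 := real_inner_self_eq_norm_sq _
      obtain ⟨habs1, habs2⟩ := abs_le.1 habs
      nlinarith [(hA₀ (U s).1).1, (hA₁ (U s).1).1,
        mul_nonneg hg0 (sub_nonneg.2 (hA₀ (U s).1).1),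
        mul_nonneg (sub_nonneg.2 hg1) (sub_nonneg.2 (hA₁ (U s).1).1), hLCA0,
        mul_nonneg hLCA0 hq]
    have hgron := expGronGe (c := 2*mneg) ht (fun s => inner_self_deriv hV s) hlow
    simp only [hU0] at hgron
    have e1 : Real.exp (mneg*T)^2 = Real.exp (2*mneg*T) := by
      rw [sq, ← Real.exp_add]; ring_nf
    have e2 : Real.exp (2*mneg*T) ≤ Real.exp (2*mneg*(t-0)) := by
      apply Real.exp_le_exp.2
      nlinarith [mul_nonneg (neg_nonneg.2 hmneg0.le) (sub_nonneg.2 htT)]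
    have hUt1 : (Dφ t x (w₁, (0:H₂))).1 = (U t).1 := by rw [hUt]
    rw [hUt1]
    have hq1 : ⟪((w₁, (0:H₂)) : H₁ × H₂).1, ((w₁, (0:H₂)) : H₁ × H₂).1⟫_ℝ = ‖w₁‖^2 :=
      real_inner_self_eq_norm_sq _
    rw [hq1] at hgron
    have hqt : ⟪(U t).1, (U t).1⟫_ℝ = ‖(U t).1‖^2 := real_inner_self_eq_norm_sq _
    rw [hqt] at hgron
    nlinarith [hgron, e1, e2, norm_nonneg (U t).1, norm_nonneg w₁,
      Real.exp_pos (mneg*T), sq_nonneg (Real.exp (mneg*T) * ‖w₁‖ - ‖(U t).1‖),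
      sq_nonneg (Real.exp (mneg*T) * ‖w₁‖ + ‖(U t).1‖),
      mul_nonneg (sub_nonneg.2 e2) (sq_nonneg ‖w₁‖),
      mul_pos (Real.exp_pos (mneg*T)) (Real.exp_pos (mneg*T))]
  · -- upper bound block
    intro w₂
    obtain ⟨U, hU0, hUt, hU⟩ := key ((0:H₁), w₂)
    have h2small : ∀ s, 0 ≤ s → ‖(U s).2‖ ≤ ‖w₂‖ := by
      intro s hs
      have h := hUsnd U hU s hs
      rw [hU0] at h
      have h1 : ⟪(U s).2, (U s).2⟫_ℝ = ‖(U s).2‖^2 := real_inner_self_eq_norm_sq _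
      have h2 : ⟪(((0:H₁), w₂) : H₁ × H₂).2, (((0:H₁), w₂) : H₁ × H₂).2⟫_ℝ = ‖w₂‖^2 :=
        real_inner_self_eq_norm_sq _
      rw [h1, h2] at h
      nlinarith [norm_nonneg (U s).2, norm_nonneg w₂]
    have hV : ∀ s, HasDerivAt (fun σ => (U σ).1) ((DX (φ s x) (U s)).1) s := by
      intro s
      simpa [Function.comp_def] using (ContinuousLinearMap.fst ℝ H₁ H₂).hasFDerivAt.comp_hasDerivAt s (hU s)
    have hhigh : ∀ s ∈ Set.Icc (0:ℝ) t,
        2 * ⟪(DX (φ s x) (U s)).1, (U s).1⟫_ℝ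
          ≤ c * ⟪(U s).1, (U s).1⟫_ℝ + (LCA+1)*‖w₂‖^2 := by
      intro s hs
      have habs := hDX3 (φ s x) (hnorm1 s hs) (U s)
      obtain ⟨hg0, hg1⟩ := hg01 (φ s x)
      have hq : (0:ℝ) ≤ ⟪(U s).1, (U s).1⟫_ℝ := real_inner_self_nonneg
      have hqn : ⟪(U s).1, (U s).1⟫_ℝ = ‖(U s).1‖^2 := real_inner_self_eq_norm_sq _
      obtain ⟨habs1, habs2⟩ := abs_le.1 habs
      have hw := h2small s hs.1
      rw [hcdef]
      nlinarith [(hA₀ (U s).1).2, (hA₁ (U s).1).2,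
        mul_nonneg hg0 (sub_nonneg.2 (hA₀ (U s).1).2),
        mul_nonneg (sub_nonneg.2 hg1) (sub_nonneg.2 (hA₁ (U s).1).2),
        mul_nonneg (mul_nonneg hLCA0 (sub_nonneg.2 hw)) (norm_nonneg (U s).1),
        mul_nonneg hLCA0 (sq_nonneg (‖(U s).1‖ - ‖w₂‖)),
        hq, sq_nonneg ‖w₂‖, hLCA0]
    have hgron := expGronInhom (c := c) (d := (LCA+1)*‖w₂‖^2) hcpos ht
      (fun s => inner_self_deriv hV s) hhigh
    simp only [hU0] at hgron
    have hzero1 : ⟪(((0:H₁), w₂) : H₁ × H₂).1, (((0:H₁), w₂) : H₁ × H₂).1⟫_ℝ = 0 := by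
      simp
    rw [hzero1, zero_add] at hgron
    have hexpm : Real.exp (c*(t-0)) ≤ Real.exp (c*T) :=
      Real.exp_le_exp.2 (by nlinarith [hcpos, mul_nonneg hcpos.le (sub_nonneg.2 htT)])
    have hqt : ⟪(U t).1, (U t).1⟫_ℝ = ‖(U t).1‖^2 := real_inner_self_eq_norm_sq _
    rw [hqt] at hgron
    have hK2sq : (Real.sqrt (Real.exp (c*T) * (LCA+1) / c))^2 = Real.exp (c*T) * (LCA+1) / c :=
      Real.sq_sqrt (le_of_lt (div_pos (mul_pos (Real.exp_pos _) (by linarith)) hcpos))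
    have hUt1 : (Dφ t x ((0:H₁), w₂)).1 = (U t).1 := by rw [hUt]
    rw [hUt1]
    have hd0 : 0 ≤ (LCA+1)*‖w₂‖^2 / c :=
      div_nonneg (mul_nonneg (by linarith) (sq_nonneg _)) hcpos.le
    have hsq : ‖(U t).1‖^2 ≤ (Real.sqrt (Real.exp (c*T) * (LCA+1) / c) * ‖w₂‖)^2 := by
      have h1 : (Real.sqrt (Real.exp (c*T) * (LCA+1) / c) * ‖w₂‖)^2
          = Real.exp (c*T) * (LCA+1) / c * ‖w₂‖^2 := by
        rw [mul_pow, hK2sq]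
      rw [h1]
      have he : Real.exp (c*T) * (LCA+1) / c * ‖w₂‖^2
          = Real.exp (c*(t-0)) * ((LCA+1)*‖w₂‖^2/c)
            + (Real.exp (c*T) - Real.exp (c*(t-0))) * ((LCA+1)*‖w₂‖^2/c) := by
        ring
      rw [he]
      linarith [hgron, mul_nonneg (sub_nonneg.2 hexpm) hd0, hd0]
    calc ‖(U t).1‖ = Real.sqrt (‖(U t).1‖^2) := (Real.sqrt_sq (norm_nonneg _)).symm
      _ ≤ Real.sqrt ((Real.sqrt (Real.exp (c*T) * (LCA+1) / c) * ‖w₂‖)^2) :=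
          Real.sqrt_le_sqrt hsq
      _ = Real.sqrt (Real.exp (c*T) * (LCA+1) / c) * ‖w₂‖ :=
          Real.sqrt_sq (mul_nonneg (Real.sqrt_nonneg _) (norm_nonneg _))
end

section
/- Let E be a real Banach space, W an open neighborhood of 0 in E, H a real Hilbert space, and S : W → B(H) a smooth (C^∞) map such that S(x) is self-adjoint for every x ∈ W and S(0) = I (the identity operator). Then there exist an open neighborhood W' ⊆ W of 0 and a smooth map C : W' → B(H) such that for every x ∈ W', the operator C(x) is self-adjoint, invertible, satisfies ⟨C(x)v, v⟩ > 0 for all v ≠ 0, and C(x) ∘ C(x) = S(x). -/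
set_option maxHeartbeats 1000000

open scoped InnerProductSpace
open Metric ContinuousLinearMap

section Aux

variable {R : Type*} [NormedRing R] [NormedAlgebra ℝ R]

private lemma sqrt_unique {C₁ C₂ : R}
    (h₁ : ‖C₁ - 1‖ < 1/2) (h₂ : ‖C₂ - 1‖ < 1/2) (h : C₁ * C₁ = C₂ * C₂) : C₁ = C₂ := by
  by_contra hne
  have hD : C₁ - C₂ ≠ 0 := sub_ne_zero.2 hne
  have hDpos : 0 < ‖C₁ - C₂‖ := norm_pos_iff.2 hD
  have e1 : C₁ * (C₁ - C₂) + (C₁ - C₂) * C₂ = 0 := by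
    rw [mul_sub, sub_mul, h]; abel
  have key : (C₁ - 1) * (C₁ - C₂) + (C₁ - C₂) * (C₂ - 1)
      = -((2:ℝ) • (C₁ - C₂)) := by
    calc (C₁ - 1) * (C₁ - C₂) + (C₁ - C₂) * (C₂ - 1)
        = (C₁ * (C₁ - C₂) + (C₁ - C₂) * C₂) - ((C₁ - C₂) + (C₁ - C₂)) := by
          noncomm_ring
      _ = -((2:ℝ) • (C₁ - C₂)) := by rw [e1, two_smul]; abel
  have hnorm : 2 * ‖C₁ - C₂‖ ≤ ‖C₁ - 1‖ * ‖C₁ - C₂‖ + ‖C₁ - C₂‖ * ‖C₂ - 1‖ := by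
    have h2 : ‖(C₁ - 1) * (C₁ - C₂) + (C₁ - C₂) * (C₂ - 1)‖
        ≤ ‖C₁ - 1‖ * ‖C₁ - C₂‖ + ‖C₁ - C₂‖ * ‖C₂ - 1‖ :=
      (norm_add_le _ _).trans (add_le_add (norm_mul_le _ _) (norm_mul_le _ _))
    rw [key, norm_neg, norm_smul] at h2
    simpa using h2
  nlinarith [hDpos]


/-- The continuous linear map `C ↦ (c ↦ C * c + c * C)`. -/
noncomputable def Tmap (R : Type*) [NormedRing R] [NormedAlgebra ℝ R] :
    R →L[ℝ] R →L[ℝ] R :=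
  ContinuousLinearMap.mul ℝ R + (ContinuousLinearMap.mul ℝ R).flip

lemma Tmap_apply (C c : R) : Tmap R C c = C * c + c * C := by
  simp [Tmap, ContinuousLinearMap.mul_apply']

lemma Tmap_norm_le (D : R) : ‖Tmap R D‖ ≤ 2 * ‖D‖ := by
  refine opNorm_le_bound _ (by positivity) fun c => ?_
  rw [Tmap_apply]
  calc ‖D * c + c * D‖ ≤ ‖D * c‖ + ‖c * D‖ := norm_add_le _ _
    _ ≤ ‖D‖ * ‖c‖ + ‖c‖ * ‖D‖ := add_le_add (norm_mul_le _ _) (norm_mul_le _ _)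
    _ = 2 * ‖D‖ * ‖c‖ := by ring

variable [CompleteSpace R]

lemma exists_unit_Tmap {C : R} (hC : ‖C - 1‖ < 1/2) :
    ∃ u : (R →L[ℝ] R)ˣ, u.val = Tmap R C := by
  set t : R →L[ℝ] R := (2⁻¹ : ℝ) • Tmap R (C - 1) with ht
  have htn : ‖t‖ < 1 := by
    have h0 : ‖t‖ ≤ 2⁻¹ * ‖Tmap R (C - 1)‖ := by
      refine opNorm_le_bound _ (by positivity) fun c => ?_
      rw [ht, ContinuousLinearMap.smul_apply, norm_smul]
      have h1 : ‖Tmap R (C - 1) c‖ ≤ ‖Tmap R (C - 1)‖ * ‖c‖ := le_opNorm _ _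
      have h2 : ‖(2⁻¹:ℝ)‖ = 2⁻¹ := by norm_num
      rw [h2, mul_assoc]
      nlinarith
    have h1 : ‖Tmap R (C - 1)‖ ≤ 2 * ‖C - 1‖ := Tmap_norm_le _
    nlinarith
  have htn' : ‖-t‖ < 1 := by rwa [norm_neg]
  set u₀ : (R →L[ℝ] R)ˣ := Units.oneSub (-t) htn' with hu₀
  have hval₀ : (u₀ : R →L[ℝ] R) = 1 + t := by
    show (1 : R →L[ℝ] R) - (-t) = 1 + t
    rw [sub_neg_eq_add]
  have h2u : ((1 : R →L[ℝ] R) + 1) * ((2⁻¹:ℝ) • 1) = 1 := by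
    ext c
    simp only [ContinuousLinearMap.mul_apply, ContinuousLinearMap.add_apply,
      ContinuousLinearMap.smul_apply, ContinuousLinearMap.one_apply]
    module
  have h2u' : ((2⁻¹:ℝ) • (1 : R →L[ℝ] R)) * (1 + 1) = 1 := by
    ext c
    simp only [ContinuousLinearMap.mul_apply, ContinuousLinearMap.add_apply,
      ContinuousLinearMap.smul_apply, ContinuousLinearMap.one_apply]
    module
  set u₂ : (R →L[ℝ] R)ˣ := ⟨1 + 1, (2⁻¹:ℝ) • 1, h2u, h2u'⟩ with hu₂
  refine ⟨u₂ * u₀, ?_⟩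
  have hval : ((u₂ * u₀ : (R →L[ℝ] R)ˣ) : R →L[ℝ] R) = (1 + 1) * (1 + t) := by
    rw [Units.val_mul, hval₀]
  rw [hval]
  ext c
  simp only [ContinuousLinearMap.mul_apply, ContinuousLinearMap.add_apply,
    ContinuousLinearMap.smul_apply, ContinuousLinearMap.one_apply, ht, Tmap_apply,
    sub_mul, mul_sub, one_mul, mul_one]
  module

lemma exists_derivEquiv {C : R} (hC : ‖C - 1‖ < 1/2) :
    ∃ e : (R × R) ≃L[ℝ] (R × R), (e : (R × R) →L[ℝ] (R × R))
      = (fst ℝ R R).prod (((Tmap R C).comp (snd ℝ R R)) - fst ℝ R R) := by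
  obtain ⟨u, hu⟩ := exists_unit_Tmap hC
  refine ⟨ContinuousLinearEquiv.equivOfInverse
    ((fst ℝ R R).prod (((Tmap R C).comp (snd ℝ R R)) - fst ℝ R R))
    ((fst ℝ R R).prod ((↑u⁻¹ : R →L[ℝ] R).comp ((snd ℝ R R) + (fst ℝ R R))))
    ?_ ?_, rfl⟩
  · intro p
    refine Prod.ext rfl ?_
    have key : (↑u⁻¹ : R →L[ℝ] R) (Tmap R C p.2) = p.2 := by
      rw [← hu, ← ContinuousLinearMap.mul_apply, u.inv_mul, ContinuousLinearMap.one_apply]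
    show (↑u⁻¹ : R →L[ℝ] R) ((Tmap R C p.2 - p.1) + p.1) = p.2
    rw [sub_add_cancel]
    exact key
  · intro p
    refine Prod.ext rfl ?_
    have key : Tmap R C ((↑u⁻¹ : R →L[ℝ] R) (p.2 + p.1)) = p.2 + p.1 := by
      rw [← hu, ← ContinuousLinearMap.mul_apply, u.mul_inv, ContinuousLinearMap.one_apply]
    show Tmap R C ((↑u⁻¹ : R →L[ℝ] R) (p.2 + p.1)) - p.1 = p.2
    rw [key, add_sub_cancel_right]

lemma hasFDerivAt_sq (A C : R) :
    HasFDerivAt (fun p : R × R => (p.1, p.2 * p.2 - p.1))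
      ((fst ℝ R R).prod (((Tmap R C).comp (snd ℝ R R)) - fst ℝ R R)) (A, C) := by
  have hb := (ContinuousLinearMap.mul ℝ R).isBoundedBilinearMap.hasFDerivAt (C, C)
  have hd : HasFDerivAt (fun p : R × R => (p.2, p.2))
      (((snd ℝ R R).prod (snd ℝ R R)) : (R × R) →L[ℝ] (R × R)) (A, C) :=
    ((snd ℝ R R).prod (snd ℝ R R)).hasFDerivAt
  have h1 := hb.comp (A, C) hd
  have h3 : HasFDerivAt (fun p : R × R => p.2 * p.2)
      ((Tmap R C).comp (snd ℝ R R)) (A, C) := by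
    refine h1.congr_fderiv ?_
    ext c <;> simp [Tmap_apply]
  exact (HasFDerivAt.prodMk hasFDerivAt_fst (h3.sub hasFDerivAt_fst))

end Aux

section Aux2

variable {R : Type*} [NormedRing R] [NormedAlgebra ℝ R] [CompleteSpace R]

lemma local_sqrt {A₀ C₀ : R} (hC₀ : ‖C₀ - 1‖ < 1/2) (hsq : C₀ * C₀ = A₀) :
    ∃ g : R → R, ContDiffAt ℝ (⊤ : ℕ∞) g A₀ ∧ g A₀ = C₀ ∧ ∀ᶠ A in nhds A₀, g A * g A = A := by
  obtain ⟨e, he⟩ := exists_derivEquiv hC₀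
  have hΦ : ContDiff ℝ (⊤ : ℕ∞) (fun p : R × R => (p.1, p.2 * p.2 - p.1)) :=
    contDiff_fst.prodMk ((contDiff_snd.mul contDiff_snd).sub contDiff_fst)
  have hder : HasFDerivAt (fun p : R × R => (p.1, p.2 * p.2 - p.1))
      (e : (R × R) →L[ℝ] (R × R)) (A₀, C₀) := by
    rw [he]; exact hasFDerivAt_sq A₀ C₀
  have hat : ContDiffAt ℝ (⊤ : ℕ∞) (fun p : R × R => (p.1, p.2 * p.2 - p.1)) (A₀, C₀) :=
    hΦ.contDiffAt
  have hstrict := hat.hasStrictFDerivAt' hder (by simp)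
  set Φ := fun p : R × R => (p.1, p.2 * p.2 - p.1) with hΦdef
  set ψ := hstrict.localInverse Φ e (A₀, C₀) with hψdef
  have hΦpt : Φ (A₀, C₀) = (A₀, 0) := by simp [hΦdef, hsq]
  refine ⟨fun A => (ψ (A, 0)).2, ?_, ?_, ?_⟩
  · have h := hat.to_localInverse hder (by simp)
    have h' : ContDiffAt ℝ (⊤ : ℕ∞) ψ (A₀, 0) := by
      rw [hΦpt] at h; exact h
    exact contDiff_snd.contDiffAt.comp _
      (h'.comp A₀ (contDiffAt_id.prodMk contDiffAt_const))
  · have h := hstrict.localInverse_apply_image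
    rw [hΦpt] at h
    rw [← hψdef] at h
    show (ψ (A₀, 0)).2 = C₀
    rw [h]
  · have hr := hstrict.eventually_right_inverse
    rw [hΦpt] at hr
    have ht : Filter.Tendsto (fun A : R => (A, (0:R))) (nhds A₀) (nhds (A₀, (0:R))) :=
      (continuous_id.prodMk continuous_const).tendsto A₀
    filter_upwards [ht.eventually hr] with A hA
    have h1 : (ψ (A, 0)).1 = A := congrArg Prod.fst hA
    have h2 : (ψ (A, 0)).2 * (ψ (A, 0)).2 - (ψ (A, 0)).1 = 0 := congrArg Prod.snd hA
    rw [h1] at h2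
    exact sub_eq_zero.1 h2

lemma exists_smooth_sqrt :
    ∃ ε > (0:ℝ), ∃ g : R → R, ContDiffOn ℝ (⊤ : ℕ∞) g (ball (1:R) ε) ∧
      ∀ A ∈ ball (1:R) ε, g A * g A = A ∧ ‖g A - 1‖ < 1/2 := by
  have h11 : ‖(1:R) - 1‖ < 1/2 := by norm_num
  obtain ⟨g, hgat, hg1, hgsq⟩ := local_sqrt h11 (one_mul 1)
  have hg1cont : ∀ᶠ A in nhds (1:R), ‖g A - 1‖ < 1/2 := by
    have hc : Filter.Tendsto (fun A => ‖g A - 1‖) (nhds (1:R)) (nhds ‖g (1:R) - 1‖) :=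
      ((hgat.continuousAt.sub continuousAt_const).norm)
    rw [hg1] at hc
    simp only [sub_self, norm_zero] at hc
    exact hc.eventually_lt_const (by norm_num)
  obtain ⟨ε, εpos, hball⟩ := Metric.eventually_nhds_iff_ball.1 (hgsq.and hg1cont)
  refine ⟨ε, εpos, g, ?_, fun A hA => hball A hA⟩
  intro A₀ hA₀
  obtain ⟨hsq₀, hn₀⟩ := hball A₀ hA₀
  obtain ⟨g₂, hg₂at, hg₂val, hg₂sq⟩ := local_sqrt hn₀ hsq₀
  have hg₂n : ∀ᶠ A in nhds A₀, ‖g₂ A - 1‖ < 1/2 := by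
    have hc : Filter.Tendsto (fun A => ‖g₂ A - 1‖) (nhds A₀) (nhds ‖g₂ A₀ - 1‖) :=
      ((hg₂at.continuousAt.sub continuousAt_const).norm)
    rw [hg₂val] at hc
    exact hc.eventually_lt_const hn₀
  have hmem : ball (1:R) ε ∈ nhds A₀ := isOpen_ball.mem_nhds hA₀
  have heq : (fun A => g A) =ᶠ[nhds A₀] g₂ := by
    filter_upwards [hmem, hg₂sq, hg₂n] with A h1 h2 h3
    exact sqrt_unique (hball A h1).2 h3 ((hball A h1).1.trans h2.symm)
  exact ((hg₂at.congr_of_eventuallyEq heq).contDiffWithinAt)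

end Aux2

/-- Smooth square root of a smooth family of self-adjoint operators equal to the
identity at the origin: near `0` there is a smooth family `C(x)` of self-adjoint,
invertible, positive-definite operators with `C(x)² = S(x)`. -/
theorem smooth_operator_square_root
    {E : Type*} [NormedAddCommGroup E] [NormedSpace ℝ E]
    {H : Type*} [NormedAddCommGroup H] [InnerProductSpace ℝ H] [CompleteSpace H]
    (W : Set E) (hWopen : IsOpen W) (hW0 : (0 : E) ∈ W)
    (S : E → H →L[ℝ] H)
    (hSsmooth : ContDiffOn ℝ (⊤ : ℕ∞) S W)
    (hSsa : ∀ x ∈ W, ∀ v w : H, ⟪S x v, w⟫_ℝ = ⟪v, S x w⟫_ℝ)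
    (hS0 : S 0 = ContinuousLinearMap.id ℝ H) :
    ∃ W' : Set E, W' ⊆ W ∧ IsOpen W' ∧ (0 : E) ∈ W' ∧
      ∃ C : E → H →L[ℝ] H,
        ContDiffOn ℝ (⊤ : ℕ∞) C W' ∧
        ∀ x ∈ W',
          (∀ v w : H, ⟪C x v, w⟫_ℝ = ⟪v, C x w⟫_ℝ) ∧
          IsUnit (C x) ∧
          (∀ v : H, v ≠ 0 → 0 < ⟪C x v, v⟫_ℝ) ∧
          (C x).comp (C x) = S x := by
  obtain ⟨ε, εpos, g, hgsmooth, hg⟩ := exists_smooth_sqrt (R := H →L[ℝ] H)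
  refine ⟨W ∩ S ⁻¹' (ball (1 : H →L[ℝ] H) ε), Set.inter_subset_left, ?_, ?_, ?_⟩
  · exact hSsmooth.continuousOn.isOpen_inter_preimage hWopen isOpen_ball
  · refine ⟨hW0, ?_⟩
    show S 0 ∈ ball (1 : H →L[ℝ] H) ε
    rw [hS0, ← ContinuousLinearMap.one_def]
    exact mem_ball_self εpos
  refine ⟨fun x => g (S x), ?_, ?_⟩
  · exact hgsmooth.comp (hSsmooth.mono Set.inter_subset_left) fun x hx => hx.2
  intro x hx
  obtain ⟨hxW, hxball⟩ := hx
  obtain ⟨hsq, hn⟩ := hg (S x) hxball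
  set Cx : H →L[ℝ] H := g (S x) with hCxdef
  have hAsa : IsSelfAdjoint (S x) :=
    ContinuousLinearMap.isSelfAdjoint_iff_isSymmetric.2 fun v w => hSsa x hxW v w
  have hstar : star Cx = Cx := by
    refine sqrt_unique ?_ hn ?_
    · have e : star Cx - 1 = star (Cx - 1) := by rw [star_sub, star_one]
      rw [e, norm_star (Cx - 1)]
      exact hn
    · calc star Cx * star Cx = star (Cx * Cx) := (star_mul Cx Cx).symm
        _ = star (S x) := by rw [hsq]
        _ = S x := hAsa.star_eq
        _ = Cx * Cx := hsq.symm
  have hCsa : IsSelfAdjoint Cx := hstar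
  refine ⟨fun v w => (ContinuousLinearMap.isSelfAdjoint_iff_isSymmetric.1 hCsa) v w, ?_, ?_, ?_⟩
  · have h1 : ‖(1 : H →L[ℝ] H) - Cx‖ < 1 := by
      rw [norm_sub_rev]; linarith
    exact ⟨Units.oneSub _ h1, sub_sub_cancel 1 Cx⟩
  · intro v hv
    have hv0 : 0 < ‖v‖ := norm_pos_iff.2 hv
    have h1 : ⟪Cx v, v⟫_ℝ = ⟪v, v⟫_ℝ + ⟪(Cx - 1) v, v⟫_ℝ := by
      rw [ContinuousLinearMap.sub_apply, ContinuousLinearMap.one_apply, inner_sub_left]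
      ring
    have h2 : |⟪(Cx - 1) v, v⟫_ℝ| ≤ ‖Cx - 1‖ * ‖v‖ * ‖v‖ := by
      calc |⟪(Cx - 1) v, v⟫_ℝ| ≤ ‖(Cx - 1) v‖ * ‖v‖ := abs_real_inner_le_norm _ _
        _ ≤ ‖Cx - 1‖ * ‖v‖ * ‖v‖ := by
            have := (Cx - 1).le_opNorm v
            nlinarith [norm_nonneg v]
    have h3 : ⟪v, v⟫_ℝ = ‖v‖ * ‖v‖ := real_inner_self_eq_norm_mul_norm v
    have habs := abs_le.1 h2
    rw [h1, h3]
    nlinarith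
  · show Cx.comp Cx = S x
    rw [← ContinuousLinearMap.mul_def]
    exact hsq
end
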